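/- arXiv:2005.00600 — 5 statements merged into one kernel-verified Lean document; each statement's English description precedes it below -/
import Mathlib

section
/- In the partition algebra A_r(δ), for every n ≥ 0 and every 1 ≤ i ≤ r-1, the generator e_i commutes with the element l_n(N_1,...,N_r), the n-th elementary supersymmetric polynomial evaluated at the normalised Jucys-Murphy elements. -/
open PowerSeries

namespace PartitionAlgebraAuxJM

variable {A : Type*} [Ring A]

/-- Two power series whose coefficients pairwise commute, commute. -/
lemma ps_commute {f g : A⟦X⟧}
    (h : ∀ m n, Commute ((coeff m) f) ((coeff n) g)) : f * g = g * f := by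
  ext n
  rw [coeff_mul, coeff_mul, ← Finset.Nat.sum_antidiagonal_swap]
  refine Finset.sum_congr rfl fun p _ => ?_
  simp only [Prod.fst_swap, Prod.snd_swap]
  exact (h p.2 p.1).eq

lemma coeff_mul_mem (S : Subring A) {f g : A⟦X⟧} (hf : ∀ n, coeff n f ∈ S)
    (hg : ∀ n, coeff n g ∈ S) : ∀ n, coeff n (f * g) ∈ S := fun n => by
  rw [coeff_mul]
  exact sum_mem fun p _ => S.mul_mem (hf _) (hg _)

lemma coeff_prod_mem (S : Subring A) (l : List A⟦X⟧)
    (h : ∀ f ∈ l, ∀ n, coeff n f ∈ S) : ∀ n, coeff n l.prod ∈ S := by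
  induction l with
  | nil =>
      intro n
      rw [List.prod_nil, coeff_one]
      split <;> [exact S.one_mem; exact S.zero_mem]
  | cons f l ih =>
      rw [List.prod_cons]
      exact coeff_mul_mem S (h f (List.mem_cons_self))
        (ih fun g hg => h g (List.mem_cons_of_mem f hg))

lemma coeff_one_sub_CX (x : A) (n : ℕ) :
    coeff n (1 - C x * X) = if n = 0 then 1 else if n = 1 then -x else 0 := by
  rw [map_sub, coeff_one, coeff_C_mul, coeff_X]
  rcases n with _ | _ | n <;> simp

lemma coeff_one_add_CX (x : A) (n : ℕ) :
    coeff n (1 + C x * X) = if n = 0 then 1 else if n = 1 then x else 0 := by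
  rw [map_add, coeff_one, coeff_C_mul, coeff_X]
  rcases n with _ | _ | n <;> simp

/-- the geometric series is a right inverse of `1 - C x * X`. -/
lemma geom_inv_right (x : A) :
    (1 - C x * X) * PowerSeries.mk (fun k => x ^ k) = 1 := by
  have h : (1 - C x * X) * PowerSeries.mk (fun k => x ^ k)
      = PowerSeries.mk (fun k => x ^ k)
        - C x * (PowerSeries.mk (fun k => x ^ k) * X) := by
    rw [sub_mul, one_mul, mul_assoc, (commute_X (PowerSeries.mk (fun k => x ^ k))).eq]
  rw [h]
  ext n
  rcases n with _ | n
  · simp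
  · simp [pow_succ']

lemma pairwise_commute_map {M : Type*} [Mul M] (f : ℕ → M)
    (h : ∀ a b, Commute (f a) (f b)) :
    ∀ l : List ℕ, (l.map f).Pairwise Commute
  | [] => List.Pairwise.nil
  | a :: l => by
      rw [List.map_cons, List.pairwise_cons]
      exact ⟨fun x hx => by
        obtain ⟨b, _, rfl⟩ := List.mem_map.mp hx
        exact h a b, pairwise_commute_map f h l⟩

lemma prod_mul_rev_prod_inv {M : Type*} [Monoid M] (u v : ℕ → M) :
    ∀ l : List ℕ, (∀ j ∈ l, u j * v j = 1) →
      (l.map u).prod * ((l.map v).reverse).prod = 1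
  | [], _ => by simp
  | j :: l, h => by
      rw [List.map_cons, List.map_cons, List.reverse_cons, List.prod_cons,
        List.prod_append, List.prod_cons, List.prod_nil, mul_one, mul_assoc,
        ← mul_assoc (l.map u).prod,
        prod_mul_rev_prod_inv u v l (fun k hk => h k (List.mem_cons_of_mem j hk)),
        one_mul, h j (List.mem_cons_self)]

/-- The key abstract lemma. -/
lemma main_aux (N : ℕ → A) (hNcomm : ∀ i j, N i * N j = N j * N i)
    (E : A) (a b : ℕ)
    (hEab : E * N a + E * N b = 0) (habE : N a * E + N b * E = 0)
    (hE : ∀ j, j ≠ a → j ≠ b → E * N j = N j * E)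
    (r : ℕ) (ja jb : ℕ)
    (hja : ja < (r + 1) / 2) (hja2 : 2 * (ja + 1) - 1 = a)
    (hjb : jb < r / 2) (hjb2 : 2 * (jb + 1) = b)
    (ℓ : ℕ → A)
    (hgen : (PowerSeries.mk ℓ) *
        (((List.range (r / 2)).map
            (fun j => 1 - PowerSeries.C (N (2 * (j + 1))) * PowerSeries.X)).prod) =
      ((List.range ((r + 1) / 2)).map
          (fun i => 1 + PowerSeries.C (N (2 * (i + 1) - 1)) * PowerSeries.X)).prod) :
    ∀ n, E * ℓ n = ℓ n * E := by
  classical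
  -- centralizer of E
  set S : Subring A := Subring.centralizer ({E} : Set A) with hS
  have hmemS : ∀ x : A, x ∈ S ↔ E * x = x * E := by
    intro x
    rw [hS, Subring.mem_centralizer_iff]
    constructor
    · intro h; exact h E rfl
    · intro h g hg; rw [Set.mem_singleton_iff.mp hg]; exact h
  have hNS : ∀ j, j ≠ a → j ≠ b → N j ∈ S := fun j h1 h2 =>
    (hmemS _).mpr (hE j h1 h2)
  -- commutative subring generated by the N's
  set CS : Subring A := Subring.closure (Set.range N) with hCS
  have hNCS : ∀ j, N j ∈ CS := fun j => Subring.subset_closure ⟨j, rfl⟩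
  have hCScomm : ∀ x ∈ CS, ∀ y ∈ CS, x * y = y * x := by
    intro x hx y hy
    have h1 : CS ≤ Subring.centralizer (Set.range N) := by
      rw [hCS]
      refine Subring.closure_le.mpr ?_
      rintro z ⟨j, rfl⟩
      refine Subring.mem_centralizer_iff.mpr ?_
      rintro g ⟨k, rfl⟩
      exact hNcomm k j
    have hy' := h1 hy
    have h2 : CS ≤ Subring.centralizer ({y} : Set A) := by
      rw [hCS]
      refine Subring.closure_le.mpr ?_
      rintro z ⟨j, rfl⟩
      refine Subring.mem_centralizer_iff.mpr ?_
      rintro g hg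
      rw [Set.mem_singleton_iff.mp hg]
      exact (Subring.mem_centralizer_iff.mp hy' (N j) ⟨j, rfl⟩).symm
    exact (Subring.mem_centralizer_iff.mp (h2 hx) y rfl).symm
  -- coefficientwise-CS power series commute
  have hcomm : ∀ f g : A⟦X⟧, (∀ n, coeff n f ∈ CS) → (∀ n, coeff n g ∈ CS) →
      f * g = g * f := fun f g hf hg =>
    ps_commute fun m n => hCScomm _ (hf m) _ (hg n)
  -- notations
  set fD : ℕ → A⟦X⟧ := fun j => 1 - PowerSeries.C (N (2 * (j + 1))) * PowerSeries.X
    with hfD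
  set fN : ℕ → A⟦X⟧ := fun j => 1 + PowerSeries.C (N (2 * (j + 1) - 1)) * PowerSeries.X
    with hfN
  set vI : ℕ → A⟦X⟧ := fun j => PowerSeries.mk (fun k => (N (2 * (j + 1))) ^ k) with hvI
  have hfDCS : ∀ j n, coeff n (fD j) ∈ CS := by
    intro j n
    rw [hfD]
    simp only
    rw [coeff_one_sub_CX]
    split_ifs
    · exact CS.one_mem
    · exact CS.neg_mem (hNCS _)
    · exact CS.zero_mem
  have hfNCS : ∀ j n, coeff n (fN j) ∈ CS := by
    intro j n
    rw [hfN]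
    simp only
    rw [coeff_one_add_CX]
    split_ifs
    · exact CS.one_mem
    · exact hNCS _
    · exact CS.zero_mem
  have hvICS : ∀ j n, coeff n (vI j) ∈ CS := by
    intro j n
    rw [hvI]
    simp only [coeff_mk]
    exact CS.pow_mem (hNCS _) n
  -- extract distinguished factors
  set lb : List ℕ := (List.range (r / 2)).erase jb with hlb
  set la : List ℕ := (List.range ((r + 1) / 2)).erase ja with hla
  have hjbmem : jb ∈ List.range (r / 2) := List.mem_range.mpr hjb
  have hjamem : ja ∈ List.range ((r + 1) / 2) := List.mem_range.mpr hja
  have hDsplit : ((List.range (r / 2)).map fD).prod = fD jb * (lb.map fD).prod := by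
    rw [List.Perm.prod_eq' ((List.perm_cons_erase hjbmem).map fD)
      (pairwise_commute_map fD (fun p q =>
        (hcomm _ _ (hfDCS p) (hfDCS q))) _), List.map_cons, List.prod_cons, hlb]
  have hNsplit : ((List.range ((r + 1) / 2)).map fN).prod = fN ja * (la.map fN).prod := by
    rw [List.Perm.prod_eq' ((List.perm_cons_erase hjamem).map fN)
      (pairwise_commute_map fN (fun p q =>
        (hcomm _ _ (hfNCS p) (hfNCS q))) _), List.map_cons, List.prod_cons, hla]
  -- the local ratio series G
  set g : ℕ → A := fun k => if k = 0 then 1 else (N b) ^ (k - 1) * (N a + N b) with hg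
  have hGfD : PowerSeries.mk g * fD jb = fN ja := by
    have hfDjb : fD jb = 1 - PowerSeries.C (N b) * PowerSeries.X := by
      rw [hfD]; simp only [hjb2]
    have hfNja : fN ja = 1 + PowerSeries.C (N a) * PowerSeries.X := by
      rw [hfN]; simp only [hja2]
    rw [hfDjb, hfNja]
    have h : PowerSeries.mk g * (1 - PowerSeries.C (N b) * PowerSeries.X)
        = PowerSeries.mk g - (PowerSeries.mk g * PowerSeries.C (N b)) * PowerSeries.X := by
      rw [mul_sub, mul_one, mul_assoc]
    rw [h]
    ext n
    rcases n with _ | n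
    · rw [map_sub, coeff_zero_mul_X, coeff_mk, map_add, coeff_zero_one, coeff_C_mul,
        coeff_zero_X, hg]
      simp
    · rw [map_sub, coeff_succ_mul_X, coeff_mk, coeff_mul_C, coeff_mk, map_add,
        coeff_one, coeff_C_mul, coeff_X, hg]
      rcases n with _ | n
      · simp
      · simp only [Nat.succ_ne_zero, if_false, Nat.add_sub_cancel]
        have hc : (N a + N b) * N b = N b * (N a + N b) := by
          rw [add_mul, mul_add, hNcomm a b]
        have heq : (N b) ^ (n + 1) * (N a + N b) = ((N b) ^ n * (N a + N b)) * N b := by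
          rw [pow_succ, mul_assoc, ← hc, ← mul_assoc]
        rw [heq]
        simp
  -- step 5 : mk ℓ * D' = mk g * Num'
  have hDCS : ∀ n, coeff n (lb.map fD).prod ∈ CS :=
    coeff_prod_mem CS _ (by
      intro f hf n
      obtain ⟨j, _, rfl⟩ := List.mem_map.mp hf
      exact hfDCS j n)
  have hNumCS : ∀ n, coeff n (la.map fN).prod ∈ CS :=
    coeff_prod_mem CS _ (by
      intro f hf n
      obtain ⟨j, _, rfl⟩ := List.mem_map.mp hf
      exact hfNCS j n)
  have hfDjbCS : ∀ n, coeff n (fD jb) ∈ CS := hfDCS jb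
  have hgen' : (PowerSeries.mk ℓ * (lb.map fD).prod) * fD jb
      = (PowerSeries.mk g * (la.map fN).prod) * fD jb := by
    have h1 : PowerSeries.mk ℓ * (fD jb * (lb.map fD).prod)
        = fN ja * (la.map fN).prod := by
      rw [← hDsplit, ← hNsplit]; exact hgen
    rw [hcomm _ _ (hfDCS jb) hDCS, ← mul_assoc] at h1
    rw [h1, ← hGfD, mul_assoc, hcomm _ _ (hfDCS jb) hNumCS, ← mul_assoc]
  have hinvb : fD jb * vI jb = 1 := by
    rw [hfD, hvI]
    exact geom_inv_right (N (2 * (jb + 1)))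
  have h5 : PowerSeries.mk ℓ * (lb.map fD).prod
      = PowerSeries.mk g * (la.map fN).prod := by
    have h6 := congrArg (fun z => z * vI jb) hgen'
    simpa only [mul_assoc, hinvb, mul_one] using h6
  -- step 7 : mk ℓ = mk g * K
  set K : A⟦X⟧ := (la.map fN).prod * ((lb.map vI).reverse).prod with hK
  have hDinv : (lb.map fD).prod * ((lb.map vI).reverse).prod = 1 :=
    prod_mul_rev_prod_inv fD vI lb (fun j _ => by
      rw [hfD, hvI]; exact geom_inv_right (N (2 * (j + 1))))
  have h7 : PowerSeries.mk ℓ = PowerSeries.mk g * K := by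
    have h8 := congrArg (fun z => z * ((lb.map vI).reverse).prod) h5
    simpa only [mul_assoc, hDinv, mul_one, hK] using h8
  -- coefficients of K centralize E
  have hKS : ∀ n, coeff n K ∈ S := by
    rw [hK]
    refine coeff_mul_mem S ?_ ?_
    · refine coeff_prod_mem S _ ?_
      intro f hf n
      obtain ⟨j, hj, rfl⟩ := List.mem_map.mp hf
      have hj' := (List.Nodup.mem_erase_iff List.nodup_range).mp (hla ▸ hj)
      have hja' : 2 * (j + 1) - 1 ≠ a := fun hcon => hj'.1 (by omega)
      have hjb' : 2 * (j + 1) - 1 ≠ b := fun hcon => by omega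
      rw [hfN]
      simp only
      rw [coeff_one_add_CX]
      split_ifs
      · exact S.one_mem
      · exact hNS _ hja' hjb'
      · exact S.zero_mem
    · refine coeff_prod_mem S _ ?_
      intro f hf n
      rw [List.mem_reverse] at hf
      obtain ⟨j, hj, rfl⟩ := List.mem_map.mp hf
      have hj' := (List.Nodup.mem_erase_iff List.nodup_range).mp (hlb ▸ hj)
      have hja' : 2 * (j + 1) ≠ a := fun hcon => by omega
      have hjb' : 2 * (j + 1) ≠ b := fun hcon => hj'.1 (by omega)
      rw [hvI]
      simp only [coeff_mk]
      exact S.pow_mem (hNS _ hja' hjb') n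
  -- E annihilates the positive coefficients of G on both sides
  have hEg : ∀ k, E * g (k + 1) = 0 := by
    intro k
    rw [hg]
    simp only [Nat.succ_ne_zero, if_false, Nat.add_sub_cancel]
    have hc : (N b) ^ k * (N a + N b) = (N a + N b) * (N b) ^ k := by
      have hco : Commute (N a + N b) (N b) := Commute.add_left
        (hNcomm a b) (Commute.refl _)
      exact ((hco.pow_right k).eq).symm
    rw [hc, ← mul_assoc, mul_add, hEab, zero_mul]
  have hgE : ∀ k, g (k + 1) * E = 0 := by
    intro k
    rw [hg]
    simp only [Nat.succ_ne_zero, if_false, Nat.add_sub_cancel]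
    rw [mul_assoc, add_mul, habE, mul_zero]
  -- conclude
  intro n
  have hln : ℓ n = ∑ p ∈ Finset.HasAntidiagonal.antidiagonal n, g p.1 * coeff p.2 K := by
    have := congrArg (coeff n) h7
    rw [coeff_mk, coeff_mul] at this
    simpa only [coeff_mk] using this
  rw [hln, Finset.mul_sum, Finset.sum_mul]
  refine Finset.sum_congr rfl fun p _ => ?_
  rcases p with ⟨k, m⟩
  simp only
  rcases k with _ | k
  · have hg0 : g 0 = 1 := by rw [hg]; simp
    rw [hg0, one_mul, (hmemS _).mp (hKS m)]
  · rw [← mul_assoc, hEg k, zero_mul, mul_assoc, ← (hmemS _).mp (hKS m),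
      ← mul_assoc, hgE k, zero_mul]

end PartitionAlgebraAuxJM

/-- In the partition algebra `A_r(δ)` (a `ℂ`-algebra with generators `e i`, `s i` and
pairwise-commuting normalised Jucys–Murphy elements `N i` satisfying the stated
relations), every generator `e i` (with `1 ≤ i ≤ r-1`) commutes with each
element `ℓ n = l_n(N₁,…,N_r)`, where the `ℓ n` are defined by the generating
function `Σ_{n≥0} ℓ n · tⁿ = ∏_{i=1}^{⌈r/2⌉}(1 + N_{2i-1}t) · ∏_{j=1}^{⌊r/2⌋}(1 - N_{2j}t)⁻¹`
in `A_r(δ)⟦t⟧`, stated equivalently by cross-multiplication. -/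
theorem partitionAlgebra_e_commutes_with_elemSuperJM
    {A : Type*} [Ring A] [Algebra ℂ A] (δ : ℂ) (r : ℕ)
    (e s N : ℕ → A)
    (hNcomm : ∀ i j, N i * N j = N j * N i)
    (heN : ∀ i j, 1 ≤ i → i ≤ r - 1 → j ≠ i → j ≠ i + 1 → e i * N j = N j * e i)
    (heNanti : ∀ i, 1 ≤ i → i ≤ r - 1 →
      e i * N i = -(e i * N (i + 1)) ∧ N i * e i = -(N (i + 1) * e i))
    (ℓ : ℕ → A)
    (hgen : (PowerSeries.mk ℓ) *
        (((List.range (r / 2)).map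
            (fun j => 1 - PowerSeries.C (N (2 * (j + 1))) * PowerSeries.X)).prod) =
      ((List.range ((r + 1) / 2)).map
          (fun i => 1 + PowerSeries.C (N (2 * (i + 1) - 1)) * PowerSeries.X)).prod) :
    ∀ n : ℕ, ∀ i, 1 ≤ i → i ≤ r - 1 → e i * ℓ n = ℓ n * e i := by
  intro n i hi1 hir
  obtain ⟨h1, h2⟩ := heNanti i hi1 hir
  have hsum1 : e i * N i + e i * N (i + 1) = 0 := by rw [h1]; simp
  have hsum2 : N i * e i + N (i + 1) * e i = 0 := by rw [h2]; simp
  rcases Nat.even_or_odd i with ⟨m, hm⟩ | ⟨m, hm⟩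
  · -- i = 2m even : a = i+1, b = i
    have hm1 : 1 ≤ m := by omega
    refine PartitionAlgebraAuxJM.main_aux N hNcomm (e i) (i + 1) i
      (by rw [add_comm]; exact hsum1) (by rw [add_comm]; exact hsum2)
      (fun j hj1 hj2 => heN i j hi1 hir hj2 hj1)
      r m (m - 1) (by omega) (by omega) (by omega) (by omega) ℓ hgen n
  · -- i = 2m+1 odd : a = i, b = i+1
    refine PartitionAlgebraAuxJM.main_aux N hNcomm (e i) i (i + 1)
      hsum1 hsum2 (fun j hj1 hj2 => heN i j hi1 hir hj1 hj2)
      r m m (by omega) (by omega) (by omega) (by omega) ℓ hgen n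
end

section
/- Let μ ⊂ λ be partitions such that (μ,λ) is a δ-pair, where λ ⊢ k-l and μ ⊢ k-m. Then the generating functions agree: ∏_{i=0}^{k-l-1}(1+(i-δ/2)t) / ∏_{a∈λ}(1+(δ/2-c(a))t) = ∏_{i=0}^{k-m-1}(1+(i-δ/2)t) / ∏_{a∈μ}(1+(δ/2-c(a))t) as rational functions in t. -/
/-- For a partition `λ` with `|λ| = n` (so `n = k - l`), the generating function
`λ(t) = ∏_{i=0}^{n-1}(1+(i-δ/2)t) / ∏_{a∈λ}(1+(δ/2-c(a))t)` as a rational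
function in `t` over `ℂ`, where `c((i,j)) = j - i`. -/
noncomputable def genFn (δ : ℂ) (n : ℕ) (lam : YoungDiagram) : RatFunc ℂ :=
  (∏ i ∈ Finset.range n, (1 + RatFunc.C ((i : ℂ) - δ / 2) * RatFunc.X)) /
    (∏ a ∈ lam.cells,
      (1 + RatFunc.C (δ / 2 - (((a.2 : ℤ) - (a.1 : ℤ) : ℤ) : ℂ)) * RatFunc.X))

/-- `(μ,λ)` is a `δ`-pair: `μ ⊆ λ`, the skew diagram `λ/μ` is a (nonempty)
horizontal strip (all boxes in one row), and its right-most box has content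
`δ - |μ|`. -/
def IsDeltaPair (δ : ℂ) (mu lam : YoungDiagram) : Prop :=
  mu ≤ lam ∧
  (∃ r0 : ℕ, ∀ c ∈ lam.cells \ mu.cells, c.1 = r0) ∧
  ∃ b ∈ lam.cells \ mu.cells,
    (∀ c ∈ lam.cells \ mu.cells, c.2 ≤ b.2) ∧
    ((((b.2 : ℤ) - (b.1 : ℤ) : ℤ) : ℂ)) = δ - (mu.card : ℂ)

lemma one_add_C_mul_X_ne_zero (c : ℂ) :
    (1 + RatFunc.C c * RatFunc.X : RatFunc ℂ) ≠ 0 := by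
  have h : (1 + RatFunc.C c * RatFunc.X : RatFunc ℂ)
      = algebraMap (Polynomial ℂ) (RatFunc ℂ)
        (1 + Polynomial.C c * Polynomial.X) := by
    simp [map_add, map_mul, RatFunc.algebraMap_C, RatFunc.algebraMap_X]
  rw [h]
  apply RatFunc.algebraMap_ne_zero
  intro hp
  have := congrArg (fun p => Polynomial.coeff p 0) hp
  simp at this

/-- If `(μ,λ)` is a `δ`-pair, with `λ ⊢ k-l` and `μ ⊢ k-m`, then the generating
functions agree: `λ(t) = μ(t)` as rational functions in `t`. -/
theorem genFn_eq_of_deltaPair (δ : ℂ) (k l m : ℕ) (hl : l ≤ k) (hm : m ≤ k)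
    (lam mu : YoungDiagram) (hlam : lam.card = k - l) (hmu : mu.card = k - m)
    (hpair : IsDeltaPair δ mu lam) :
    genFn δ (k - l) lam = genFn δ (k - m) mu := by
  obtain ⟨hle, ⟨r0, hr0⟩, b, hbS, hbmax, hbc⟩ := hpair
  have hsub : mu.cells ⊆ lam.cells := YoungDiagram.cells_subset_iff.mpr hle
  -- strip description
  have hS : lam.cells \ mu.cells
      = (Finset.Ico (mu.rowLen r0) (lam.rowLen r0)).image (fun j => (r0, j)) := by
    ext ⟨i, j⟩
    simp only [Finset.mem_sdiff, Finset.mem_image, Finset.mem_Ico,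
      YoungDiagram.mem_cells, YoungDiagram.mem_iff_lt_rowLen]
    constructor
    · rintro ⟨h1, h2⟩
      have hi : i = r0 := hr0 (i, j) (by
        simp [Finset.mem_sdiff, YoungDiagram.mem_cells,
          YoungDiagram.mem_iff_lt_rowLen, h1, h2])
      subst hi
      exact ⟨j, ⟨le_of_not_gt h2, h1⟩, rfl⟩
    · rintro ⟨j', ⟨hj1, hj2⟩, hEq⟩
      obtain ⟨rfl, rfl⟩ := Prod.mk.injEq .. ▸ hEq
      exact ⟨hj2, not_lt.mpr hj1⟩
  -- b = (r0, lam.rowLen r0 - 1)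
  have hbS' := hbS
  rw [hS] at hbS'
  obtain ⟨jb, hjb, hbeq⟩ := Finset.mem_image.mp hbS'
  rw [Finset.mem_Ico] at hjb
  have hmult : mu.rowLen r0 < lam.rowLen r0 := lt_of_le_of_lt hjb.1 hjb.2
  have htop : (r0, lam.rowLen r0 - 1) ∈ lam.cells \ mu.cells := by
    rw [hS]
    exact Finset.mem_image.mpr ⟨lam.rowLen r0 - 1, Finset.mem_Ico.mpr (by omega), rfl⟩
  have hjbtop : jb = lam.rowLen r0 - 1 := by
    have := hbmax _ htop
    rw [← hbeq] at this
    omega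
  have hb1 : b.1 = r0 := by rw [← hbeq]
  have hb2 : b.2 = lam.rowLen r0 - 1 := by rw [← hbeq, hjbtop]
  -- delta value
  have hδ : δ = ((lam.rowLen r0 : ℂ) - 1 - r0) + mu.card := by
    rw [hb1, hb2] at hbc
    have : ((lam.rowLen r0 - 1 : ℕ) : ℂ) - r0 = δ - mu.card := by
      exact_mod_cast hbc
    rw [Nat.cast_sub (by omega)] at this
    push_cast at this ⊢
    linear_combination -this
  -- cardinality
  have hinj : Function.Injective (fun j : ℕ => (r0, j)) := by
    intro x y h; simpa using h
  have hcard : lam.card = mu.card + (lam.rowLen r0 - mu.rowLen r0) := by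
    have h1 := Finset.card_sdiff_add_card_eq_card hsub
    rw [hS, Finset.card_image_of_injective _ hinj, Nat.card_Ico] at h1
    unfold YoungDiagram.card
    omega
  have hcards : mu.card ≤ lam.card := by omega
  -- rewrite goal in terms of cards
  rw [← hlam, ← hmu]
  unfold genFn
  -- split numerator
  rw [← Finset.prod_range_mul_prod_Ico
      (fun i => (1 + RatFunc.C ((i : ℂ) - δ / 2) * RatFunc.X)) hcards]
  -- split denominator
  rw [← Finset.prod_sdiff hsub, mul_comm (∏ a ∈ lam.cells \ mu.cells, _)]
  -- the extra factors agree
  have hE : (∏ i ∈ Finset.Ico mu.card lam.card,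
        (1 + RatFunc.C ((i : ℂ) - δ / 2) * RatFunc.X))
      = ∏ a ∈ lam.cells \ mu.cells,
        (1 + RatFunc.C (δ / 2 - (((a.2 : ℤ) - (a.1 : ℤ) : ℤ) : ℂ)) * RatFunc.X) := by
    rw [hS, Finset.prod_image (fun x _ y _ h => hinj h)]
    refine Finset.prod_bij' (fun i _ => lam.rowLen r0 - 1 - (i - mu.card))
      (fun j _ => mu.card + (lam.rowLen r0 - 1 - j)) ?_ ?_ ?_ ?_ ?_
    · intro i hi
      simp only [Finset.mem_Ico] at hi ⊢
      omega
    · intro j hj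
      simp only [Finset.mem_Ico] at hj ⊢
      omega
    · intro i hi
      simp only [Finset.mem_Ico] at hi
      beta_reduce
      omega
    · intro j hj
      simp only [Finset.mem_Ico] at hj
      beta_reduce
      omega
    · intro i hi
      simp only [Finset.mem_Ico] at hi
      congr 1
      congr 1
      rw [hδ]
      have h1 : (i : ℂ) - mu.card = ((i - mu.card : ℕ) : ℂ) := by
        rw [Nat.cast_sub hi.1]
      have h2 : ((lam.rowLen r0 - 1 - (i - mu.card) : ℕ) : ℤ)
          = (lam.rowLen r0 : ℤ) - 1 - ((i : ℤ) - mu.card) := by omega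
      rw [h2]
      push_cast
      ring
  rw [hE]
  rw [mul_div_mul_right _ _ (Finset.prod_ne_zero_iff.mpr
    (fun a _ => one_add_C_mul_X_ne_zero _))]
end

section
/- Let λ, μ ∈ Λ_k(δ) with μ ⊂ λ. If λ(t) = μ(t) as rational functions in t, then there is a δ-chain of partitions τ^(x) ⊂ τ^(x+1) ⊂ ... ⊂ τ^(y) with τ^(x) = μ and τ^(y) = λ. -/
/-- A `δ`-chain `τ⁽ˣ⁾ ⊂ τ⁽ˣ⁺¹⁾ ⊂ … ⊂ τ⁽ʸ⁾`: each consecutive pair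
`(τ⁽ⁱ⁾, τ⁽ⁱ⁺¹⁾)` is a `δ`-pair, with the horizontal strips occurring in
consecutive rows (the strip of the `i`-th pair lies in the `(i+1)`-th row of the
Young diagram, i.e. in row index `i` with 0-indexed rows). -/
def IsDeltaChain (δ : ℂ) (c : ℕ → YoungDiagram) (x y : ℕ) : Prop :=
  ∀ i, x ≤ i → i < y →
    IsDeltaPair δ (c i) (c (i + 1)) ∧
      ∀ b ∈ (c (i + 1)).cells \ (c i).cells, b.1 = i


open Polynomial

lemma factor_ne_zero (a : ℂ) : (1 + C a * X : ℂ[X]) ≠ 0 := by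
  intro h
  have : (1 + C a * X : ℂ[X]).coeff 0 = 1 := by simp
  rw [h] at this; simp at this

lemma prod_factors_ne_zero (M : Multiset ℂ) :
    (M.map (fun a => 1 + C a * X : ℂ → ℂ[X])).prod ≠ 0 := by
  apply Multiset.prod_ne_zero
  simp only [Multiset.mem_map]
  rintro ⟨a, -, h⟩
  exact factor_ne_zero a h

lemma roots_prod_factors (M : Multiset ℂ) :
    (M.map (fun a => 1 + C a * X : ℂ → ℂ[X])).prod.roots
      = (M.filter (· ≠ 0)).map (fun a => -a⁻¹) := by
  induction M using Multiset.induction with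
  | empty => simp
  | cons a M ih =>
      rw [Multiset.map_cons, Multiset.prod_cons,
        Polynomial.roots_mul (mul_ne_zero (factor_ne_zero a) (prod_factors_ne_zero M)), ih]
      by_cases ha : a = 0
      · subst ha; simp
      · have h1 : (1 + C a * X : ℂ[X]) = C a * (X - C (-a⁻¹)) := by
          rw [mul_sub, ← C_mul, mul_neg, mul_inv_cancel₀ ha, map_neg, C_1]
          ring
        rw [h1, Polynomial.roots_C_mul _ ha, Polynomial.roots_X_sub_C,
          Multiset.filter_cons_of_pos _ (by exact ha), Multiset.map_cons]
        rfl

lemma neg_inv_injective : Function.Injective (fun a : ℂ => -a⁻¹) := by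
  intro a b h
  simp only [neg_inj] at h
  exact inv_injective h

lemma multiset_eq_of_prod_factors_eq (M N : Multiset ℂ)
    (hcard : Multiset.card M = Multiset.card N)
    (h : (M.map (fun a => 1 + C a * X : ℂ → ℂ[X])).prod
       = (N.map (fun a => 1 + C a * X : ℂ → ℂ[X])).prod) : M = N := by
  have hroots := (roots_prod_factors M).symm.trans (h ▸ roots_prod_factors N)
  have hne : M.filter (· ≠ 0) = N.filter (· ≠ 0) :=
    Multiset.map_injective neg_inv_injective hroots
  have hz : M.filter (fun a => ¬ a ≠ 0) = N.filter (fun a => ¬ a ≠ 0) := by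
    have h1 : ∀ (K : Multiset ℂ), K.filter (fun a => ¬ a ≠ 0)
        = Multiset.replicate (Multiset.card (K.filter (fun a => ¬ a ≠ 0))) 0 := by
      intro K
      apply Multiset.eq_replicate_card.mpr
      intro b hb
      simp only [Multiset.mem_filter, ne_eq, not_not] at hb
      exact hb.2
    rw [h1 M, h1 N]
    congr 1
    have cM := congrArg Multiset.card (Multiset.filter_add_not (· ≠ 0) M)
    have cN := congrArg Multiset.card (Multiset.filter_add_not (· ≠ 0) N)
    rw [Multiset.card_add] at cM cN
    have := congrArg Multiset.card hne
    omega
  calc M = M.filter (· ≠ 0) + M.filter (fun a => ¬ a ≠ 0) := (Multiset.filter_add_not _ M).symm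
    _ = N.filter (· ≠ 0) + N.filter (fun a => ¬ a ≠ 0) := by rw [hne, hz]
    _ = N := Multiset.filter_add_not _ N
lemma finprod_factor_ne_zero {α : Type*} (s : Finset α) (f : α → ℂ) :
    (∏ a ∈ s, (1 + C (f a) * X : ℂ[X])) ≠ 0 :=
  Finset.prod_ne_zero_iff.mpr fun a _ => factor_ne_zero (f a)

lemma genFn_eq_algebraMap (δ : ℂ) (n : ℕ) (lam : YoungDiagram) :
    genFn δ n lam =
      algebraMap ℂ[X] (RatFunc ℂ) (∏ i ∈ Finset.range n, (1 + C ((i : ℂ) - δ / 2) * X)) /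
      algebraMap ℂ[X] (RatFunc ℂ) (∏ a ∈ lam.cells,
        (1 + C (δ / 2 - (((a.2 : ℤ) - (a.1 : ℤ) : ℤ) : ℂ)) * X)) := by
  rw [genFn, map_prod, map_prod]
  congr 1 <;> refine Finset.prod_congr rfl fun a _ => ?_ <;>
    simp [RatFunc.algebraMap_C, RatFunc.algebraMap_X]

lemma contents_eq (δ : ℂ) (L N : ℕ) (lam mu : YoungDiagram)
    (hlam : lam.card = L) (hmu : mu.card = N) (hsub : mu ≤ lam)
    (heq : genFn δ L lam = genFn δ N mu) :
    (lam.cells \ mu.cells).val.map (fun a => (((a.2 : ℤ) - (a.1 : ℤ) : ℤ) : ℂ))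
      = (Finset.Ico N L).val.map (fun i : ℕ => δ - i) := by
  have hNL : N ≤ L := by
    rw [← hlam, ← hmu]; exact Finset.card_le_card hsub
  have hcells : mu.cells ⊆ lam.cells := hsub
  rw [genFn_eq_algebraMap, genFn_eq_algebraMap, div_eq_div_iff
    (RatFunc.algebraMap_ne_zero (finprod_factor_ne_zero _ _))
    (RatFunc.algebraMap_ne_zero (finprod_factor_ne_zero _ _)),
    ← map_mul, ← map_mul] at heq
  have hpoly := RatFunc.algebraMap_injective ℂ heq
  -- split the range product
  have hsplit : (∏ i ∈ Finset.range L, (1 + C ((i : ℂ) - δ / 2) * X : ℂ[X]))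
      = (∏ i ∈ Finset.range N, (1 + C ((i : ℂ) - δ / 2) * X)) *
        ∏ i ∈ Finset.Ico N L, (1 + C ((i : ℂ) - δ / 2) * X) := by
    rw [Finset.range_eq_Ico, Finset.range_eq_Ico]
    exact (Finset.prod_Ico_consecutive (fun i => (1 + C ((i : ℂ) - δ / 2) * X : ℂ[X])) (Nat.zero_le N) hNL).symm
  have hsdiff : (∏ a ∈ lam.cells, (1 + C (δ / 2 - (((a.2 : ℤ) - (a.1 : ℤ) : ℤ) : ℂ)) * X : ℂ[X]))
      = (∏ a ∈ mu.cells, (1 + C (δ / 2 - (((a.2 : ℤ) - (a.1 : ℤ) : ℤ) : ℂ)) * X)) *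
        ∏ a ∈ lam.cells \ mu.cells, (1 + C (δ / 2 - (((a.2 : ℤ) - (a.1 : ℤ) : ℤ) : ℂ)) * X) := by
    rw [mul_comm, Finset.prod_sdiff hcells]
  rw [hsplit, hsdiff] at hpoly
  have hcancel : (∏ i ∈ Finset.Ico N L, (1 + C ((i : ℂ) - δ / 2) * X : ℂ[X]))
      = ∏ a ∈ lam.cells \ mu.cells, (1 + C (δ / 2 - (((a.2 : ℤ) - (a.1 : ℤ) : ℤ) : ℂ)) * X) := by
    have hA : (∏ i ∈ Finset.range N, (1 + C ((i : ℂ) - δ / 2) * X : ℂ[X])) *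
        (∏ a ∈ mu.cells, (1 + C (δ / 2 - (((a.2 : ℤ) - (a.1 : ℤ) : ℤ) : ℂ)) * X)) ≠ 0 :=
      mul_ne_zero (finprod_factor_ne_zero _ _) (finprod_factor_ne_zero _ _)
    apply mul_left_cancel₀ hA
    calc _ = ((∏ i ∈ Finset.range N, (1 + C ((i : ℂ) - δ / 2) * X : ℂ[X])) *
          ∏ i ∈ Finset.Ico N L, (1 + C ((i : ℂ) - δ / 2) * X)) *
          (∏ a ∈ mu.cells, (1 + C (δ / 2 - (((a.2 : ℤ) - (a.1 : ℤ) : ℤ) : ℂ)) * X)) := by ring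
      _ = _ := by rw [hpoly]; ring
  -- now convert to multiset equality
  have := multiset_eq_of_prod_factors_eq
    ((lam.cells \ mu.cells).val.map (fun a => δ / 2 - (((a.2 : ℤ) - (a.1 : ℤ) : ℤ) : ℂ)))
    ((Finset.Ico N L).val.map (fun i : ℕ => (i : ℂ) - δ / 2))
    (by
      simp only [Multiset.card_map]
      rw [show ((lam.cells \ mu.cells).val.card) = (lam.cells \ mu.cells).card from rfl]
      rw [Finset.card_sdiff_of_subset hcells, show ((Finset.Ico N L).val.card) = (Finset.Ico N L).card from rfl,
        Nat.card_Ico]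
      have h1 : lam.cells.card = L := hlam
      have h2 : mu.cells.card = N := hmu
      omega)
    (by
      rw [Multiset.map_map, Multiset.map_map]
      rw [show ∀ (s : Finset (ℕ × ℕ)) (f : ℕ × ℕ → ℂ[X]), (s.val.map f).prod = ∏ a ∈ s, f a
        from fun s f => rfl]
      rw [show ∀ (s : Finset ℕ) (f : ℕ → ℂ[X]), (s.val.map f).prod = ∏ a ∈ s, f a
        from fun s f => rfl]
      exact hcancel.symm)
  -- apply (δ/2 - ·) to both sides
  have h2 := congrArg (Multiset.map (fun z : ℂ => δ / 2 - z)) this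
  rw [Multiset.map_map, Multiset.map_map] at h2
  rw [show ((fun z : ℂ => δ/2 - z) ∘ fun a : ℕ × ℕ => δ/2 - (((a.2:ℤ)-(a.1:ℤ):ℤ):ℂ))
      = fun a : ℕ × ℕ => (((a.2:ℤ)-(a.1:ℤ):ℤ):ℂ) from funext fun a => by
        simp only [Function.comp]; ring,
    show ((fun z : ℂ => δ/2 - z) ∘ fun i : ℕ => (i:ℂ) - δ/2) = fun i : ℕ => δ - (i:ℂ)
      from funext fun i => by simp only [Function.comp]; ring] at h2
  exact h2


lemma mem_skew {lam mu : YoungDiagram} {r j : ℕ} :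
    (r, j) ∈ lam.cells \ mu.cells ↔ mu.rowLen r ≤ j ∧ j < lam.rowLen r := by
  simp only [Finset.mem_sdiff, YoungDiagram.mem_cells, YoungDiagram.mem_iff_lt_rowLen, not_lt]
  omega

lemma skew_D' {lam mu : YoungDiagram}
    (hC : ∀ a ∈ lam.cells \ mu.cells, ∀ b ∈ lam.cells \ mu.cells,
      (a.2:ℤ) - a.1 = (b.2:ℤ) - b.1 → a = b)
    {r r' j' : ℕ} (hrr : r < r')
    (hmem : (r', j') ∈ lam.cells \ mu.cells) :
    (j':ℤ) - r' < (mu.rowLen r : ℤ) - r := by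
  by_contra hcon
  push_neg at hcon
  obtain ⟨hm, hl⟩ := mem_skew.mp hmem
  have hj : mu.rowLen r + r' ≤ j' + r := by omega
  have hanti := lam.rowLen_anti r r' hrr.le
  have hmem2 : (r, j' + r - r') ∈ lam.cells \ mu.cells := mem_skew.mpr ⟨by omega, by omega⟩
  have heq := hC _ hmem2 _ hmem (by simp only; omega)
  have : r = r' := congrArg Prod.fst heq
  omega

/-- number of skew cells in rows `< r` -/
def cnt (lam mu : YoungDiagram) (r : ℕ) : ℕ :=
  ((lam.cells \ mu.cells).filter (fun a => a.1 < r)).card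

lemma cnt_le_card (lam mu : YoungDiagram) (r : ℕ) :
    cnt lam mu r ≤ (lam.cells \ mu.cells).card :=
  Finset.card_filter_le _ _

lemma cnt_mono (lam mu : YoungDiagram) {r r' : ℕ} (h : r ≤ r') :
    cnt lam mu r ≤ cnt lam mu r' := by
  apply Finset.card_le_card
  intro a ha
  simp only [Finset.mem_filter] at ha ⊢
  exact ⟨ha.1, lt_of_lt_of_le ha.2 h⟩

lemma rowfilter_card (lam mu : YoungDiagram) (hsub : mu ≤ lam) (r : ℕ) :
    ((lam.cells \ mu.cells).filter (fun a => a.1 = r)).card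
      = lam.rowLen r - mu.rowLen r := by
  have key : (lam.cells \ mu.cells).filter (fun a => a.1 = r)
      = (Finset.Ico (mu.rowLen r) (lam.rowLen r)).map
          ⟨fun j => (r, j), fun a b h => by simpa using h⟩ := by
    ext a
    simp only [Finset.mem_filter, Finset.mem_map, Finset.mem_Ico, Function.Embedding.coeFn_mk]
    constructor
    · rintro ⟨hsk, hr⟩
      refine ⟨a.2, ?_, ?_⟩
      · have : (r, a.2) ∈ lam.cells \ mu.cells := by rwa [← hr, Prod.mk.eta]
        exact mem_skew.mp this
      · subst hr; rfl
    · rintro ⟨j, hj, rfl⟩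
      exact ⟨mem_skew.mpr hj, rfl⟩
  rw [key, Finset.card_map, Nat.card_Ico]

lemma cnt_succ (lam mu : YoungDiagram) (hsub : mu ≤ lam) (r : ℕ) :
    cnt lam mu (r+1) = cnt lam mu r + (lam.rowLen r - mu.rowLen r) := by
  rw [← rowfilter_card lam mu hsub r]
  unfold cnt
  have hcg : Finset.filter (fun a : ℕ × ℕ => a.1 < r + 1) (lam.cells \ mu.cells)
      = Finset.filter (fun a : ℕ × ℕ => a.1 < r ∨ a.1 = r) (lam.cells \ mu.cells) :=
    Finset.filter_congr (fun x _ => by omega)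
  rw [hcg, Finset.filter_or]
  apply Finset.card_union_of_disjoint
  rw [Finset.disjoint_left]
  intro a ha hb
  simp only [Finset.mem_filter] at ha hb
  omega

lemma cnt_eq_card_iff (lam mu : YoungDiagram) (r : ℕ) :
    cnt lam mu r = (lam.cells \ mu.cells).card ↔
      ∀ a ∈ lam.cells \ mu.cells, a.1 < r := by
  constructor
  · intro h a ha
    have := Finset.eq_of_subset_of_card_le (Finset.filter_subset _ _) (le_of_eq h.symm)
    rw [← this] at ha
    exact (Finset.mem_filter.mp ha).2
  · intro h
    unfold cnt
    rw [Finset.filter_true_of_mem h]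

lemma good_lemma (lam mu : YoungDiagram) (hsub : mu ≤ lam) (T : ℤ) (s : ℕ) (hs : 0 < s)
    (hcard : (lam.cells \ mu.cells).card = s)
    (hA : ∀ a ∈ lam.cells \ mu.cells, T - s < (a.2:ℤ) - a.1 ∧ (a.2:ℤ) - a.1 ≤ T)
    (hB : ∀ v : ℤ, T - s < v → v ≤ T → ∃ a ∈ lam.cells \ mu.cells, (a.2:ℤ) - a.1 = v)
    (hC : ∀ a ∈ lam.cells \ mu.cells, ∀ b ∈ lam.cells \ mu.cells,
      (a.2:ℤ) - a.1 = (b.2:ℤ) - b.1 → a = b)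
    (rT jT : ℕ) (haT : (rT, jT) ∈ lam.cells \ mu.cells) (hctT : (jT:ℤ) - rT = T)
    (hmin : ∀ a ∈ lam.cells \ mu.cells, rT ≤ a.1) :
    ∀ m : ℕ,
      (cnt lam mu (rT+m) < s →
        mu.rowLen (rT+m) < lam.rowLen (rT+m) ∧
          (lam.rowLen (rT+m) : ℤ) - 1 - (rT+m) = T - cnt lam mu (rT+m))
      ∧ (∀ a ∈ lam.cells \ mu.cells, rT+m ≤ a.1 →
          (a.2:ℤ) - a.1 ≤ T - cnt lam mu (rT+m))
      ∧ (∀ a ∈ lam.cells \ mu.cells, a.1 < rT+m →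
          T - cnt lam mu (rT+m) < (a.2:ℤ) - a.1) := by
  intro m
  induction m with
  | zero =>
      simp only [Nat.add_zero]
      have hcnt0 : cnt lam mu rT = 0 := by
        apply Finset.card_eq_zero.mpr
        rw [Finset.filter_eq_empty_iff]
        intro a ha
        have := hmin a ha
        omega
      rw [hcnt0]
      obtain ⟨hmT, hlT⟩ := mem_skew.mp haT
      refine ⟨fun _ => ?_, fun a ha _ => (hA a ha).2.trans (by simp), fun a ha hlt => ?_⟩
      · constructor
        · omega
        · have hb : (rT, lam.rowLen rT - 1) ∈ lam.cells \ mu.cells :=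
            mem_skew.mpr ⟨by omega, by omega⟩
          have h1 := (hA _ hb).2
          simp only at h1
          -- h1 : ((lam.rowLen rT - 1 : ℕ):ℤ) - rT ≤ T
          have h2 : T ≤ ((lam.rowLen rT - 1 : ℕ):ℤ) - rT := by omega
          push_cast
          omega
      · have := hmin a ha
        omega
  | succ m ih =>
      obtain ⟨ih1, ih2, ih3⟩ := ih
      set r := rT + m with hr
      have hstep : rT + (m+1) = r + 1 := rfl
      rw [hstep]
      have hle : cnt lam mu r ≤ s := hcard ▸ cnt_le_card lam mu r
      by_cases hCr : cnt lam mu r = s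
      · -- all skew boxes lie in rows < r
        have hall : ∀ a ∈ lam.cells \ mu.cells, a.1 < r :=
          (cnt_eq_card_iff lam mu r).mp (hCr.trans hcard.symm)
        have hc1 : cnt lam mu (r+1) = s := by
          have h1 := cnt_mono lam mu (by omega : r ≤ r + 1)
          have h2 := hcard ▸ cnt_le_card lam mu (r+1)
          omega
        rw [hc1]
        refine ⟨fun h => absurd h (by omega), fun a ha hge => ?_, fun a ha _ => ?_⟩
        · exact absurd (hall a ha) (by omega)
        · have h3 := ih3 a ha (hall a ha)
          rw [hCr] at h3
          exact h3
      · have hClt : cnt lam mu r < s := by omega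
        obtain ⟨hrow, hright⟩ := ih1 hClt
        have hsucc := cnt_succ lam mu hsub r
        have hcnt1 : (cnt lam mu (r+1) : ℤ) = cnt lam mu r + (lam.rowLen r - mu.rowLen r : ℕ) := by
          rw [hsucc]; push_cast; ring
        have hkey : T - cnt lam mu (r+1) = (mu.rowLen r : ℤ) - r - 1 := by
          rw [hcnt1]; omega
        -- third component first
        have comp3 : ∀ a ∈ lam.cells \ mu.cells, a.1 < r + 1 →
            T - cnt lam mu (r+1) < (a.2:ℤ) - a.1 := by
          intro a ha hlt
          rcases Nat.lt_or_ge a.1 r with h | h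
          · have := ih3 a ha h
            have hmono := cnt_mono lam mu (by omega : r ≤ r + 1)
            omega
          · have ha1 : a.1 = r := by omega
            have hm : mu.rowLen r ≤ a.2 := by
              have : (a.1, a.2) ∈ lam.cells \ mu.cells := by rwa [Prod.mk.eta]
              rw [ha1] at this
              exact (mem_skew.mp this).1
            rw [hkey]
            omega
        -- second component
        have comp2 : ∀ a ∈ lam.cells \ mu.cells, r + 1 ≤ a.1 →
            (a.2:ℤ) - a.1 ≤ T - cnt lam mu (r+1) := by
          intro a ha hge
          have hD : ((a.2:ℤ)) - a.1 < (mu.rowLen r : ℤ) - r := by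
            have : (a.1, a.2) ∈ lam.cells \ mu.cells := by rwa [Prod.mk.eta]
            exact skew_D' hC (by omega : r < a.1) this
          rw [hkey]
          omega
        refine ⟨fun hlt => ?_, comp2, comp3⟩
        -- first component
        have hv1 : T - s < T - cnt lam mu (r+1) := by omega
        have hv2 : T - cnt lam mu (r+1) ≤ T := by
          have : (0:ℤ) ≤ cnt lam mu (r+1) := Int.natCast_nonneg _
          omega
        obtain ⟨a0, ha0, hcta0⟩ := hB _ hv1 hv2
        have ha0r : a0.1 = r + 1 := by
          rcases Nat.lt_or_ge a0.1 (r+1) with h | h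
          · exact absurd hcta0 (by have := comp3 a0 ha0 h; omega)
          rcases Nat.lt_or_ge (r+1) a0.1 with h' | h'
          · exfalso
            have hD : ((a0.2:ℤ)) - a0.1 < (mu.rowLen (r+1) : ℤ) - (r+1) := by
              have : (a0.1, a0.2) ∈ lam.cells \ mu.cells := by rwa [Prod.mk.eta]
              exact skew_D' hC h' this
            have hanti : mu.rowLen (r+1) ≤ mu.rowLen r := mu.rowLen_anti r (r+1) (Nat.le_succ r)
            rw [hkey] at hcta0
            omega
          · omega
        have ha0m : mu.rowLen (r+1) ≤ a0.2 ∧ a0.2 < lam.rowLen (r+1) := by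
          have : (a0.1, a0.2) ∈ lam.cells \ mu.cells := by rwa [Prod.mk.eta]
          rw [ha0r] at this
          exact mem_skew.mp this
        constructor
        · omega
        · have hb : (r+1, lam.rowLen (r+1) - 1) ∈ lam.cells \ mu.cells :=
            mem_skew.mpr ⟨by omega, by omega⟩
          have h1 := comp2 _ hb (by simp)
          have h2 : (a0.2:ℤ) - a0.1 ≤ ((lam.rowLen (r+1) - 1 : ℕ):ℤ) - ((r+1:ℕ):ℤ) := by
            rw [ha0r] at hcta0 ⊢
            push_cast
            omega
          simp only at h1
          rw [hcta0] at h2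
          push_cast
          push_cast at h1
          omega

/-- `mu` together with all skew cells in rows `< i`. -/
def chainD (mu lam : YoungDiagram) (i : ℕ) : YoungDiagram :=
  ⟨mu.cells ∪ (lam.cells \ mu.cells).filter (fun a => a.1 < i), by
    intro a b hba ha
    simp only [Finset.coe_union, Set.mem_union, Finset.mem_coe, Finset.mem_filter,
      Finset.mem_sdiff] at ha ⊢
    obtain hm | ⟨⟨hl, hnm⟩, hri⟩ := ha
    · exact Or.inl (mu.isLowerSet hba hm)
    · have hbl : b ∈ lam.cells := lam.isLowerSet hba hl
      by_cases hbm : b ∈ mu.cells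
      · exact Or.inl hbm
      · exact Or.inr ⟨⟨hbl, hbm⟩, lt_of_le_of_lt hba.1 hri⟩⟩

lemma chainD_cells (mu lam : YoungDiagram) (i : ℕ) :
    (chainD mu lam i).cells = mu.cells ∪ (lam.cells \ mu.cells).filter (fun a => a.1 < i) :=
  rfl

lemma chainD_le (mu lam : YoungDiagram) (i : ℕ) :
    chainD mu lam i ≤ chainD mu lam (i+1) := by
  rw [← YoungDiagram.cells_subset_iff, chainD_cells, chainD_cells]
  apply Finset.union_subset_union_right
  intro a ha
  simp only [Finset.mem_filter] at ha ⊢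
  exact ⟨ha.1, by omega⟩

lemma chainD_card (mu lam : YoungDiagram) (i : ℕ) :
    (chainD mu lam i).card = mu.card + cnt lam mu i := by
  show (chainD mu lam i).cells.card = mu.cells.card + _
  rw [chainD_cells]
  apply Finset.card_union_of_disjoint
  rw [Finset.disjoint_left]
  intro a ham haf
  simp only [Finset.mem_filter, Finset.mem_sdiff] at haf
  exact haf.1.2 ham

lemma chainD_diff (mu lam : YoungDiagram) (i : ℕ) :
    (chainD mu lam (i+1)).cells \ (chainD mu lam i).cells
      = (lam.cells \ mu.cells).filter (fun a => a.1 = i) := by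
  ext a
  simp only [Finset.mem_sdiff, chainD_cells, Finset.mem_union, Finset.mem_filter,
    Finset.mem_sdiff]
  constructor
  · rintro ⟨h1 | ⟨⟨hl, hnm⟩, hlt⟩, h4⟩
    · exact absurd (Or.inl h1) h4
    · push_neg at h4
      obtain ⟨h4m, h4f⟩ := h4
      exact ⟨⟨hl, hnm⟩, by have := h4f ⟨hl, hnm⟩; omega⟩
  · rintro ⟨⟨hl, hnm⟩, hri⟩
    refine ⟨Or.inr ⟨⟨hl, hnm⟩, by omega⟩, ?_⟩
    rintro (hm | ⟨-, hlt⟩)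
    · exact hnm hm
    · omega

theorem combo (lam mu : YoungDiagram) (hsub : mu ≤ lam) (T : ℤ) (s : ℕ) (hs : 0 < s)
    (hcard : (lam.cells \ mu.cells).card = s)
    (hA : ∀ a ∈ lam.cells \ mu.cells, T - s < (a.2:ℤ) - a.1 ∧ (a.2:ℤ) - a.1 ≤ T)
    (hB : ∀ v : ℤ, T - s < v → v ≤ T → ∃ a ∈ lam.cells \ mu.cells, (a.2:ℤ) - a.1 = v)
    (hC : ∀ a ∈ lam.cells \ mu.cells, ∀ b ∈ lam.cells \ mu.cells,
      (a.2:ℤ) - a.1 = (b.2:ℤ) - b.1 → a = b) :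
    ∃ (c : ℕ → YoungDiagram) (x y : ℕ), x ≤ y ∧ c x = mu ∧ c y = lam ∧
      IsDeltaChain ((T : ℂ) + (mu.card : ℂ)) c x y := by
  -- the box with maximal content T
  obtain ⟨aT, haT, hctT⟩ := hB T (by omega) le_rfl
  set rT := aT.1 with hrT
  have haT' : (aT.1, aT.2) ∈ lam.cells \ mu.cells := by rwa [Prod.mk.eta]
  -- rT is the minimal row of the skew
  have hmin : ∀ a ∈ lam.cells \ mu.cells, rT ≤ a.1 := by
    intro a ha
    by_contra hcon
    push_neg at hcon
    have hD := skew_D' hC hcon haT'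
    have hm : mu.rowLen a.1 ≤ a.2 := by
      have : (a.1, a.2) ∈ lam.cells \ mu.cells := by rwa [Prod.mk.eta]
      exact (mem_skew.mp this).1
    have := (hA a ha).2
    omega
  have hgood := good_lemma lam mu hsub T s hs hcard hA hB hC rT aT.2 haT' hctT hmin
  -- the index where the chain stops
  have hex : ∃ m : ℕ, cnt lam mu (rT + m) = s := by
    refine ⟨lam.colLen 0, ?_⟩
    rw [← hcard]
    apply (cnt_eq_card_iff lam mu _).mpr
    intro a ha
    have hal : a ∈ lam.cells := (Finset.mem_sdiff.mp ha).1
    have hcell : (a.1, a.2) ∈ lam := by rw [Prod.mk.eta]; exact hal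
    have h0 : (a.1, 0) ∈ lam := lam.up_left_mem le_rfl (Nat.zero_le _) hcell
    have := YoungDiagram.mem_iff_lt_colLen.mp h0
    omega
  set ms := Nat.find hex with hms
  have hmsprop : cnt lam mu (rT + ms) = s := Nat.find_spec hex
  have hmslt : ∀ m < ms, cnt lam mu (rT + m) < s := by
    intro m hm
    have h1 := Nat.find_min hex hm
    have h2 := hcard ▸ cnt_le_card lam mu (rT + m)
    omega
  refine ⟨chainD mu lam, rT, rT + ms, by omega, ?_, ?_, ?_⟩
  · -- chainD mu lam rT = mu
    apply YoungDiagram.ext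
    rw [chainD_cells]
    have : (lam.cells \ mu.cells).filter (fun a => a.1 < rT) = ∅ := by
      rw [Finset.filter_eq_empty_iff]
      intro a ha
      have := hmin a ha
      omega
    rw [this, Finset.union_empty]
  · -- chainD mu lam (rT + ms) = lam
    apply YoungDiagram.ext
    rw [chainD_cells]
    have : (lam.cells \ mu.cells).filter (fun a => a.1 < rT + ms) = lam.cells \ mu.cells := by
      apply Finset.filter_true_of_mem
      exact (cnt_eq_card_iff lam mu _).mp (hmsprop.trans hcard.symm)
    rw [this, Finset.union_sdiff_of_subset hsub]
  · -- the chain property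
    intro i hxi hiy
    have hmlt : i - rT < ms := by omega
    have hieq : rT + (i - rT) = i := by omega
    have hclt : cnt lam mu i < s := by
      have := hmslt (i - rT) hmlt
      rwa [hieq] at this
    obtain ⟨hg1, hg2, hg3⟩ := hgood (i - rT)
    rw [hieq] at hg1 hg2 hg3
    obtain ⟨hrow, hright⟩ := hg1 hclt
    have hdiff := chainD_diff mu lam i
    have hb : (i, lam.rowLen i - 1) ∈ lam.cells \ mu.cells :=
      mem_skew.mpr ⟨by omega, by omega⟩
    constructor
    · refine ⟨chainD_le mu lam i, ⟨i, ?_⟩, ⟨(i, lam.rowLen i - 1), ?_, ?_, ?_⟩⟩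
      · intro c hc
        rw [hdiff] at hc
        exact (Finset.mem_filter.mp hc).2
      · rw [hdiff, Finset.mem_filter]
        exact ⟨hb, rfl⟩
      · intro c hc
        rw [hdiff, Finset.mem_filter] at hc
        obtain ⟨hcs, hcr⟩ := hc
        have : (c.1, c.2) ∈ lam.cells \ mu.cells := by rwa [Prod.mk.eta]
        rw [hcr] at this
        have := (mem_skew.mp this).2
        simp only
        omega
      · -- content computation
        have hcd : (chainD mu lam i).card = mu.card + cnt lam mu i := chainD_card mu lam i
        rw [hcd]
        have hZ : ((lam.rowLen i - 1 : ℕ) : ℤ) - (i:ℤ) = T - (cnt lam mu i : ℤ) := by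
          push_cast
          omega
        simp only
        rw [hZ]
        push_cast
        ring
    · intro b hbmem
      rw [hdiff, Finset.mem_filter] at hbmem
      exact hbmem.2

/-- If `μ ⊆ λ` in `Λ_k(δ)` and `λ(t) = μ(t)` as rational functions, then there is
a `δ`-chain from `μ` up to `λ`. -/
theorem deltaChain_of_genFn_eq (δ : ℂ) (k l m : ℕ) (hl : l ≤ k) (hm : m ≤ k)
    (lam mu : YoungDiagram) (hlam : lam.card = k - l) (hmu : mu.card = k - m)
    (hδ0 : δ = 0 → mu.cells.Nonempty ∧ lam.cells.Nonempty)
    (hsub : mu ≤ lam)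
    (heq : genFn δ (k - l) lam = genFn δ (k - m) mu) :
    ∃ (c : ℕ → YoungDiagram) (x y : ℕ), x ≤ y ∧ c x = mu ∧ c y = lam ∧
      IsDeltaChain δ c x y := by
  have hcl : lam.cells.card = k - l := hlam
  have hcm : mu.cells.card = k - m := hmu
  have hNL : k - m ≤ k - l := by
    have h1 : mu.cells.card ≤ lam.cells.card := Finset.card_le_card hsub
    omega
  have Hc := contents_eq δ (k-l) (k-m) lam mu hlam hmu hsub heq
  by_cases hEq : lam.card = mu.card
  · have hcells : lam.cells = mu.cells :=
      (Finset.eq_of_subset_of_card_le hsub (le_of_eq hEq)).symm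
    have hml : lam = mu := YoungDiagram.ext hcells
    exact ⟨fun _ => mu, 0, 0, le_rfl, rfl, by rw [hml], fun i h1 h2 => absurd h2 (by omega)⟩
  · set s := (k-l) - (k-m) with hsdef
    have hslt : 0 < s := by
      have : lam.card = lam.cells.card := rfl
      have : mu.card = mu.cells.card := rfl
      omega
    have hcard : (lam.cells \ mu.cells).card = s := by
      rw [Finset.card_sdiff_of_subset hsub]; omega
    have hNmem : (k - m) ∈ Finset.Ico (k-m) (k-l) := Finset.mem_Ico.mpr ⟨le_rfl, by omega⟩
    have hmem1 : δ - ((k-m : ℕ):ℂ) ∈ (Finset.Ico (k-m) (k-l)).val.map (fun i : ℕ => δ - i) :=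
      Multiset.mem_map_of_mem _ (Finset.mem_val.mpr hNmem)
    rw [← Hc] at hmem1
    obtain ⟨a0, ha0, hcta0⟩ := Multiset.mem_map.mp hmem1
    set T : ℤ := (a0.2:ℤ) - a0.1 with hT
    have hδint : δ = (T:ℂ) + ((k-m:ℕ):ℂ) := by linear_combination -hcta0
    have hmem_iff : ∀ w : ℤ, ((w:ℂ) ∈ (Finset.Ico (k-m) (k-l)).val.map (fun i : ℕ => δ - i))
        ↔ (T - s < w ∧ w ≤ T) := by
      intro w
      rw [Multiset.mem_map]
      constructor
      · rintro ⟨i, hi, hwi⟩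
        have hi' : k - m ≤ i ∧ i < k - l := Finset.mem_Ico.mp (Finset.mem_val.mp hi)
        have hcast : (w:ℂ) = ((T + (k-m:ℕ) - i : ℤ):ℂ) := by
          rw [← hwi, hδint]; push_cast; ring
        have hw : w = T + (k-m:ℕ) - i := by exact_mod_cast hcast
        omega
      · rintro ⟨h1, h2⟩
        refine ⟨(k-m) + (T - w).toNat, Finset.mem_val.mpr (Finset.mem_Ico.mpr ⟨by omega, by omega⟩), ?_⟩
        have hz : ((((k-m) + (T-w).toNat : ℕ)) : ℤ) = ((k-m : ℕ) : ℤ) + T - w := by omega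
        rw [hδint,
          show ((((k-m) + (T-w).toNat : ℕ)) : ℂ) = (((((k-m) + (T-w).toNat : ℕ)) : ℤ) : ℂ) by
            push_cast; ring,
          hz]
        push_cast
        ring
    have hA : ∀ a ∈ lam.cells \ mu.cells, T - s < (a.2:ℤ) - a.1 ∧ (a.2:ℤ) - a.1 ≤ T := by
      intro a ha
      have hmm : (((a.2:ℤ) - (a.1:ℤ) : ℤ) : ℂ)
          ∈ (lam.cells \ mu.cells).val.map (fun a => (((a.2 : ℤ) - (a.1 : ℤ) : ℤ) : ℂ)) :=
        Multiset.mem_map_of_mem _ (Finset.mem_val.mpr ha)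
      rw [Hc] at hmm
      exact (hmem_iff _).mp hmm
    have hB : ∀ v : ℤ, T - s < v → v ≤ T → ∃ a ∈ lam.cells \ mu.cells, (a.2:ℤ) - a.1 = v := by
      intro v h1 h2
      have hmm := (hmem_iff v).mpr ⟨h1, h2⟩
      rw [← Hc] at hmm
      obtain ⟨a, ha, hav⟩ := Multiset.mem_map.mp hmm
      exact ⟨a, Finset.mem_val.mp ha, by exact_mod_cast hav⟩
    have hnod : ((lam.cells \ mu.cells).val.map
        (fun a => (((a.2 : ℤ) - (a.1 : ℤ) : ℤ) : ℂ))).Nodup := by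
      rw [Hc]
      exact (Finset.Ico (k-m) (k-l)).nodup.map
        (fun a b h => by simp at h; exact_mod_cast h)
    have hC : ∀ a ∈ lam.cells \ mu.cells, ∀ b ∈ lam.cells \ mu.cells,
        (a.2:ℤ) - a.1 = (b.2:ℤ) - b.1 → a = b := by
      intro a ha b hb he
      exact Multiset.inj_on_of_nodup_map hnod a (Finset.mem_val.mpr ha) b (Finset.mem_val.mpr hb)
        (by exact_mod_cast congrArg (fun z : ℤ => (z:ℂ)) he)
    obtain ⟨c, x, y, hxy, hcx, hcy, hchain⟩ := combo lam mu hsub T s hslt hcard hA hB hC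
    refine ⟨c, x, y, hxy, hcx, hcy, ?_⟩
    have hms : ((T:ℂ) + ((k-m:ℕ):ℂ)) = (T:ℂ) + (mu.card:ℂ) := by rw [hmu]
    rw [hδint, hms]
    exact hchain
end

section
/- Let λ, μ ∈ Λ_k(δ) be partitions with λ(t) = μ(t) as rational functions in t. Then either μ ⊆ λ or λ ⊆ μ (containment of Young diagrams). -/
set_option linter.unusedVariables false

/-- The cell on diagonal `c` at depth `t`. -/
def cellOf (c : ℤ) (t : ℕ) : ℕ × ℕ := (t + (-c).toNat, t + c.toNat)

/-- Number of cells of `lam` on the diagonal of content `c`. -/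
def diagCount (lam : YoungDiagram) (c : ℤ) : ℕ :=
  (lam.cells.filter (fun a => (a.2 : ℤ) - (a.1 : ℤ) = c)).card

lemma cellOf_content (c : ℤ) (t : ℕ) :
    ((cellOf c t).2 : ℤ) - ((cellOf c t).1 : ℤ) = c := by
  simp only [cellOf]; push_cast; omega

lemma eq_cellOf {c : ℤ} {a : ℕ × ℕ} (h : (a.2 : ℤ) - (a.1 : ℤ) = c) :
    a = cellOf c (min a.1 a.2) := by
  obtain ⟨i, j⟩ := a
  simp only [cellOf, Prod.ext_iff] at *
  omega

lemma cellOf_injective (c : ℤ) : Function.Injective (cellOf c) := by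
  intro t t' h
  simp only [cellOf, Prod.ext_iff] at h
  omega

lemma cellOf_mem_of_le {c : ℤ} {t t' : ℕ} {lam : YoungDiagram} (h : t ≤ t')
    (h' : cellOf c t' ∈ lam) : cellOf c t ∈ lam :=
  lam.up_left_mem (by simp [cellOf]; omega) (by simp [cellOf]; omega) h'

lemma cellOf_mem_iff {c : ℤ} {t : ℕ} {lam : YoungDiagram} :
    cellOf c t ∈ lam ↔ t < diagCount lam c := by
  constructor
  · intro h
    have hsub : (Finset.range (t + 1)).image (cellOf c) ⊆
        lam.cells.filter (fun a => (a.2 : ℤ) - (a.1 : ℤ) = c) := by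
      intro a ha
      simp only [Finset.mem_image, Finset.mem_range] at ha
      obtain ⟨s, hs, rfl⟩ := ha
      simp only [Finset.mem_filter, YoungDiagram.mem_cells, cellOf_content, and_true]
      exact cellOf_mem_of_le (Nat.lt_succ_iff.mp hs) h
    have := Finset.card_le_card hsub
    rwa [Finset.card_image_of_injective _ (cellOf_injective c), Finset.card_range] at this
  · intro h
    by_contra hmem
    have hsub : lam.cells.filter (fun a => (a.2 : ℤ) - (a.1 : ℤ) = c) ⊆
        (Finset.range t).image (cellOf c) := by
      intro a ha
      simp only [Finset.mem_filter, YoungDiagram.mem_cells] at ha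
      obtain ⟨hmem', hc⟩ := ha
      have ha' := eq_cellOf hc
      simp only [Finset.mem_image, Finset.mem_range]
      refine ⟨min a.1 a.2, ?_, ha'.symm⟩
      by_contra hge
      exact hmem (cellOf_mem_of_le (Nat.le_of_not_lt hge) (ha' ▸ hmem'))
    have := Finset.card_le_card hsub
    rw [diagCount] at h
    have h2 := (Finset.card_image_le (s := Finset.range t) (f := cellOf c))
    rw [Finset.card_range] at h2
    omega

lemma le_of_diagCount_le {mu lam : YoungDiagram}
    (h : ∀ c, diagCount mu c ≤ diagCount lam c) : mu ≤ lam := by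
  rw [← YoungDiagram.cells_subset_iff]
  intro a ha
  rw [YoungDiagram.mem_cells] at ha ⊢
  have hc := eq_cellOf (a := a) (c := (a.2 : ℤ) - (a.1 : ℤ)) rfl
  rw [hc] at ha ⊢
  rw [cellOf_mem_iff] at ha ⊢
  exact lt_of_lt_of_le ha (h _)

open Polynomial

/-- The linear factor `1 + α X`. -/
noncomputable def lf (α : ℂ) : Polynomial ℂ := 1 + Polynomial.C α * Polynomial.X

lemma lf_ne_zero (α : ℂ) : lf α ≠ 0 := by
  intro h
  have := congrArg (Polynomial.eval 0) h
  simp [lf] at this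

lemma roots_lf {α : ℂ} (hα : α ≠ 0) : (lf α).roots = {-α⁻¹} := by
  have h : lf α = Polynomial.C α * (Polynomial.X - Polynomial.C (-α⁻¹)) := by
    rw [mul_sub, ← Polynomial.C_mul, mul_neg, mul_inv_cancel₀ hα]
    simp [lf]; ring
  rw [h, Polynomial.roots_C_mul _ hα, Polynomial.roots_X_sub_C]

lemma algebraMap_lf (α : ℂ) :
    algebraMap (Polynomial ℂ) (RatFunc ℂ) (lf α) = 1 + RatFunc.C α * RatFunc.X := by
  simp [lf, map_add, map_mul, map_one, RatFunc.algebraMap_C, RatFunc.algebraMap_X]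

lemma filter_eq_of_prod_lf_eq {A B : Multiset ℂ}
    (h : (A.map lf).prod = (B.map lf).prod) :
    A.filter (· ≠ 0) = B.filter (· ≠ 0) := by
  have key : ∀ M : Multiset ℂ, (M.map lf).prod = ((M.filter (· ≠ 0)).map lf).prod := by
    intro M
    conv_lhs => rw [← Multiset.filter_add_not (fun a => a ≠ 0) M]
    rw [Multiset.map_add, Multiset.prod_add]
    have h1 : ((M.filter (fun a => ¬ a ≠ 0)).map lf).prod = 1 := by
      apply Multiset.prod_eq_one
      intro x hx
      rw [Multiset.mem_map] at hx
      obtain ⟨α, hα, rfl⟩ := hx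
      rw [Multiset.mem_filter] at hα
      have hα0 : α = 0 := not_not.mp hα.2
      simp [lf, hα0]
    rw [h1, mul_one]
  rw [key A, key B] at h
  have hroots : ∀ M : Multiset ℂ, (∀ α ∈ M, α ≠ 0) →
      ((M.map lf).prod).roots = M.map (fun α => -α⁻¹) := by
    intro M hM
    rw [Polynomial.roots_multiset_prod _ (by
      rw [Multiset.mem_map]
      rintro ⟨α, -, hα⟩
      exact lf_ne_zero α hα)]
    rw [Multiset.bind_map]
    rw [Multiset.bind_congr (f := fun a => (lf a).roots)
      (g := fun α => ({-α⁻¹} : Multiset ℂ)) (fun α hα => roots_lf (hM α hα))]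
    exact Multiset.bind_singleton _ _
  have hinj : Function.Injective (fun α : ℂ => -α⁻¹) := by
    intro a b hab
    exact inv_injective (neg_injective hab)
  apply Multiset.map_injective hinj
  rw [← hroots _ (fun α hα => (Multiset.mem_filter.mp hα).2),
    ← hroots _ (fun α hα => (Multiset.mem_filter.mp hα).2), h]

lemma count_eq_of_prod_lf_eq {A B : Multiset ℂ}
    (h : (A.map lf).prod = (B.map lf).prod)
    (hc : Multiset.card A = Multiset.card B) (x : ℂ) : A.count x = B.count x := by
  have hf := filter_eq_of_prod_lf_eq h
  rcases eq_or_ne x 0 with rfl | hx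
  · have key : ∀ M : Multiset ℂ,
        M.count 0 + Multiset.card (M.filter (· ≠ 0)) = Multiset.card M := by
      intro M
      have h1 := congrArg Multiset.card (Multiset.filter_add_not (fun a => a ≠ 0) M)
      rw [Multiset.card_add] at h1
      have h2 : M.filter (fun a => ¬ a ≠ 0) = M.filter (fun a => (0:ℂ) = a) :=
        Multiset.filter_congr (by intro a _; simp [eq_comm])
      have h3 : M.count 0 = Multiset.card (M.filter (fun a => (0:ℂ) = a)) :=
        Multiset.count_eq_card_filter_eq M 0
      rw [h2] at h1
      omega
    have := key A
    have := key B
    have := congrArg Multiset.card hf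
    omega
  · have h1 : A.count x = (A.filter (· ≠ 0)).count x := by
      rw [Multiset.count_filter, if_pos hx]
    have h2 : B.count x = (B.filter (· ≠ 0)).count x := by
      rw [Multiset.count_filter, if_pos hx]
    rw [h1, h2, hf]

noncomputable def numPoly (δ : ℂ) (n : ℕ) : Polynomial ℂ :=
  ∏ i ∈ Finset.range n, lf ((i : ℂ) - δ / 2)

noncomputable def denPoly (δ : ℂ) (lam : YoungDiagram) : Polynomial ℂ :=
  ∏ a ∈ lam.cells, lf (δ / 2 - (((a.2 : ℤ) - (a.1 : ℤ) : ℤ) : ℂ))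

lemma genFn_eq (δ : ℂ) (n : ℕ) (lam : YoungDiagram) :
    genFn δ n lam = algebraMap (Polynomial ℂ) (RatFunc ℂ) (numPoly δ n) /
      algebraMap (Polynomial ℂ) (RatFunc ℂ) (denPoly δ lam) := by
  rw [genFn, numPoly, denPoly, map_prod, map_prod]
  simp_rw [algebraMap_lf]

lemma denPoly_ne_zero (δ : ℂ) (lam : YoungDiagram) : denPoly δ lam ≠ 0 :=
  Finset.prod_ne_zero_iff.mpr fun _ _ => lf_ne_zero _

lemma cross_mul {δ : ℂ} {n m : ℕ} {lam mu : YoungDiagram}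
    (heq : genFn δ n lam = genFn δ m mu) :
    numPoly δ n * denPoly δ mu = numPoly δ m * denPoly δ lam := by
  rw [genFn_eq, genFn_eq, div_eq_div_iff
      (RatFunc.algebraMap_ne_zero (denPoly_ne_zero δ lam))
      (RatFunc.algebraMap_ne_zero (denPoly_ne_zero δ mu))] at heq
  apply RatFunc.algebraMap_injective
  rw [map_mul, map_mul]
  exact heq

/-- The multiset of coefficients of the linear factors appearing in
`numPoly δ n * denPoly δ mu`. -/
noncomputable def msA (δ : ℂ) (n : ℕ) (mu : YoungDiagram) : Multiset ℂ :=
  (Multiset.range n).map (fun i : ℕ => (i : ℂ) - δ / 2) +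
    mu.cells.val.map (fun a => δ / 2 - (((a.2 : ℤ) - (a.1 : ℤ) : ℤ) : ℂ))

lemma prod_msA (δ : ℂ) (n : ℕ) (mu : YoungDiagram) :
    ((msA δ n mu).map lf).prod = numPoly δ n * denPoly δ mu := by
  rw [msA, Multiset.map_add, Multiset.prod_add, Multiset.map_map, Multiset.map_map,
    numPoly, denPoly, Finset.prod_eq_multiset_prod, Finset.prod_eq_multiset_prod,
    Finset.range_val]
  rfl

lemma card_msA (δ : ℂ) (n : ℕ) (mu : YoungDiagram) :
    Multiset.card (msA δ n mu) = n + mu.card := by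
  rw [msA, Multiset.card_add, Multiset.card_map, Multiset.card_map, Multiset.card_range]
  rfl

lemma aux_le {δ : ℂ} {n n' : ℕ} (hnn : n' ≤ n) {lam mu : YoungDiagram}
    (hlam : lam.card = n) (hmu : mu.card = n')
    (heq : genFn δ n lam = genFn δ n' mu) : mu ≤ lam := by
  apply le_of_diagCount_le
  intro c
  have hcount := count_eq_of_prod_lf_eq (A := msA δ n mu) (B := msA δ n' lam)
    (by rw [prod_msA, prod_msA]; exact cross_mul heq)
    (by rw [card_msA, card_msA, hlam, hmu]; omega)
    (δ / 2 - (c : ℂ))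
  -- identify the Young-diagram part of the counts with `diagCount`
  have hyd : ∀ nu : YoungDiagram,
      Multiset.count (δ / 2 - (c : ℂ))
        (nu.cells.val.map (fun a => δ / 2 - (((a.2 : ℤ) - (a.1 : ℤ) : ℤ) : ℂ)))
        = diagCount nu c := by
    intro nu
    rw [Multiset.count_map]
    rw [diagCount, Finset.card_def, Finset.filter_val]
    congr 1
    apply Multiset.filter_congr
    intro a _
    constructor
    · intro h
      have h2 : ((c : ℤ) : ℂ) = (((a.2 : ℤ) - (a.1 : ℤ) : ℤ) : ℂ) := by
        push_cast at h ⊢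
        linear_combination -h
      exact_mod_cast h2.symm
    · intro h
      rw [h]
  -- the range part of the counts
  have hrg : ∀ N : ℕ,
      Multiset.count (δ / 2 - (c : ℂ))
        ((Multiset.range N).map (fun i : ℕ => (i : ℂ) - δ / 2))
        = ((Finset.range N).filter (fun i : ℕ => δ / 2 - (c : ℂ) = (i : ℂ) - δ / 2)).card := by
    intro N
    rw [Multiset.count_map, Finset.card_def, Finset.filter_val, Finset.range_val]
  have hmono : ((Finset.range n').filter
        (fun i : ℕ => δ / 2 - (c : ℂ) = (i : ℂ) - δ / 2)).card ≤
      ((Finset.range n).filter (fun i : ℕ => δ / 2 - (c : ℂ) = (i : ℂ) - δ / 2)).card :=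
    Finset.card_le_card (Finset.filter_subset_filter _ (Finset.range_subset_range.mpr hnn))
  rw [msA, msA, Multiset.count_add, Multiset.count_add, hyd, hyd, hrg, hrg] at hcount
  omega

/-- If `λ, μ ∈ Λ_k(δ)` satisfy `λ(t) = μ(t)` as rational functions in `t`, then
either `μ ⊆ λ` or `λ ⊆ μ` (containment of Young diagrams). -/
theorem subset_or_subset_of_genFn_eq (δ : ℂ) (k l m : ℕ) (hl : l ≤ k) (hm : m ≤ k)
    (lam mu : YoungDiagram) (hlam : lam.card = k - l) (hmu : mu.card = k - m)
    (hδ0 : δ = 0 → mu.cells.Nonempty ∧ lam.cells.Nonempty)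
    (heq : genFn δ (k - l) lam = genFn δ (k - m) mu) :
    mu ≤ lam ∨ lam ≤ mu := by
  rcases le_total (k - m) (k - l) with h | h
  · exact Or.inl (aux_le h hlam hmu heq)
  · exact Or.inr (aux_le h hmu hlam heq.symm)
end

section
/- Let τ be a partition with at least one row, and let R_i, R_j be nonempty horizontal strips of boxes addable to τ in distinct rows i ≠ j (so that τ ∪ R_i and τ ∪ R_j are again partitions). Then the sets of contents c(R_i) and c(R_j) are disjoint. -/
/-- `R` is a nonempty horizontal strip of boxes addable to the partition `τ` in
row `i` (0-indexed): `R = {(i, τᵢ), (i, τᵢ+1), …, (i, τᵢ+n-1)}` for some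
`n ≥ 1` (where `τᵢ = τ.rowLen i`, taken `0` if the row is absent), and adding
the boxes of `R` to `τ` again yields a partition. -/
def AddableStrip (tau : YoungDiagram) (i : ℕ) (R : Finset (ℕ × ℕ)) : Prop :=
  ∃ n : ℕ, 1 ≤ n ∧
    R = (Finset.range n).image (fun t => (i, tau.rowLen i + t)) ∧
    ∃ mu : YoungDiagram, mu.cells = tau.cells ∪ R

lemma aux_lt (tau : YoungDiagram) (i j : ℕ) (hlt : i < j)
    (Ri Rj : Finset (ℕ × ℕ))
    (hi : AddableStrip tau i Ri) (hj : AddableStrip tau j Rj) :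
    Disjoint (Ri.image fun c => (c.2 : ℤ) - (c.1 : ℤ))
      (Rj.image fun c => (c.2 : ℤ) - (c.1 : ℤ)) := by
  obtain ⟨m, hm1, hRi, _⟩ := hi
  obtain ⟨n, hn1, hRj, mu, hmu⟩ := hj
  -- key: tau.rowLen j + n ≤ tau.rowLen (j-1)
  have hmem : (j, tau.rowLen j + (n - 1)) ∈ mu := by
    rw [← YoungDiagram.mem_cells, hmu, Finset.mem_union]
    right
    rw [hRj]
    exact Finset.mem_image.2 ⟨n - 1, Finset.mem_range.2 (by omega), rfl⟩
  have hup : (j - 1, tau.rowLen j + (n - 1)) ∈ mu :=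
    mu.up_left_mem (by omega) le_rfl hmem
  have htauj : (j - 1, tau.rowLen j + (n - 1)) ∈ tau := by
    rw [← YoungDiagram.mem_cells, hmu, Finset.mem_union] at hup
    rcases hup with h | h
    · exact (YoungDiagram.mem_cells _).1 h
    · rw [hRj] at h
      obtain ⟨t, _, ht⟩ := Finset.mem_image.1 h
      exfalso
      have := congrArg Prod.fst ht
      simp at this; omega
  have hkey : tau.rowLen j + n ≤ tau.rowLen (j - 1) := by
    have := (tau.mem_iff_lt_rowLen).1 htauj
    omega
  have hmono : tau.rowLen (j - 1) ≤ tau.rowLen i := tau.rowLen_anti _ _ (by omega)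
  rw [Finset.disjoint_left]
  rintro a ha hb
  rw [hRi] at ha; rw [hRj] at hb
  simp only [Finset.mem_image, Finset.mem_range] at ha hb
  obtain ⟨p, ⟨t, ht, hp⟩, hap⟩ := ha
  obtain ⟨q, ⟨s, hs, hq⟩, haq⟩ := hb
  subst hp; subst hq
  simp only at hap haq
  omega

/-- Horizontal strips addable to a (nonempty) partition `τ` in distinct rows
have disjoint sets of contents (`c((a,b)) = b - a`). -/
theorem addableStrip_contents_disjoint (tau : YoungDiagram)
    (htau : tau.cells.Nonempty) (i j : ℕ) (hij : i ≠ j)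
    (Ri Rj : Finset (ℕ × ℕ))
    (hi : AddableStrip tau i Ri) (hj : AddableStrip tau j Rj) :
    Disjoint (Ri.image fun c => (c.2 : ℤ) - (c.1 : ℤ))
      (Rj.image fun c => (c.2 : ℤ) - (c.1 : ℤ)) := by
  rcases lt_or_gt_of_ne hij with h | h
  · exact aux_lt tau i j h Ri Rj hi hj
  · exact (aux_lt tau j i h Rj Ri hj hi).symm
end
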